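/- arXiv:math/0402133 — 4 statements merged into one kernel-verified Lean document; each statement's English description precedes it below -/
import Mathlib

section
/- Let (S,μ) be a standard Borel probability space, and let φ and φ_n (n ∈ ℕ) be measure-class-preserving Borel automorphisms of S. Assume φ_n → φ in the Koopman (strong operator) topology. If A and A_n (n ∈ ℕ) are measurable subsets of S with μ(A_n Δ A) → 0 (Δ denoting symmetric difference), then μ(φ_n(A_n) Δ φ(A)) → 0. (That is, the natural action of the group of measure-class-preserving automorphisms on the measure algebra of (S,μ) is jointly continuous.) -/
/-!
The Koopman operator `U_φ f = √D_φ · f ∘ φ⁻¹` is an isometry of `L²(μ)` with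
`U_φ 1_C = 1_{φ C} · U_φ 1`. With `Bₙ = φₙ(Aₙ)` and `B = φ(A)`, the `L²` norm of
`1_{Bₙ} · U_φ 1 - 1_B · U_φ 1` is `(φ_*μ)(Bₙ ∆ B)^{1/2}`, and it is at most
`‖U_{φₙ} 1 - U_φ 1‖ + ‖U_{φₙ} (1_{Aₙ} - 1_A)‖ + ‖U_{φₙ} 1_A - U_φ 1_A‖`: Koopman convergence at
`1` and at `1_A`, together with `μ(Aₙ ∆ A) → 0`, sends all three terms to zero. Finally
`μ ≪ φ_*μ` turns `(φ_*μ)(Bₙ ∆ B) → 0` into `μ(Bₙ ∆ B) → 0`.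
-/

open MeasureTheory Filter Topology
open scoped ENNReal

namespace MeasureTheory

variable {S : Type*} [MeasurableSpace S] {μ : Measure S}

theorem Measure.AbsolutelyContinuous.tendsto_measure_nhds_zero {ν : Measure S}
    [IsFiniteMeasure μ] [SigmaFinite ν] (hμν : μ ≪ ν) {ι : Type*} {l : Filter ι}
    {s : ι → Set S} (hs : Tendsto (fun i => ν (s i)) l (𝓝 0)) :
    Tendsto (fun i => μ (s i)) l (𝓝 0) := by
  have hfin : ∫⁻ x, μ.rnDeriv ν x ∂ν ≠ ∞ :=
    (Measure.lintegral_rnDeriv_le.trans_lt (measure_lt_top μ _)).ne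
  simpa only [Measure.setLIntegral_rnDeriv hμν] using tendsto_setLIntegral_zero hfin hs

theorem eLpNorm_indicator_one_sub_indicator_one {P Q : Set S} (hP : MeasurableSet P)
    (hQ : MeasurableSet Q) {p : ℝ≥0∞} (hp : p ≠ 0) (hp_top : p ≠ ∞) :
    eLpNorm (P.indicator 1 - Q.indicator (1 : S → ℝ)) p μ = μ (symmDiff P Q) ^ (1 / p.toReal) := by
  have hnorm : ∀ x, ‖(P.indicator 1 - Q.indicator (1 : S → ℝ) : S → ℝ) x‖
      = ‖(symmDiff P Q).indicator (fun _ => (1 : ℝ)) x‖ := by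
    intro x
    by_cases hxP : x ∈ P <;> by_cases hxQ : x ∈ Q <;> simp [Set.mem_symmDiff, hxP, hxQ]
  rw [eLpNorm_congr_norm_ae (ae_of_all _ hnorm),
    eLpNorm_indicator_const (hP.symmDiff hQ) hp hp_top]
  simp

theorem tendsto_eLpNorm_two_of_tendsto_integral_sq {ι : Type*} {l : Filter ι}
    {g : ι → S → ℝ} (hg : ∀ i, MemLp (g i) 2 μ)
    (h : Tendsto (fun i => ∫ s, g i s ^ 2 ∂μ) l (𝓝 0)) :
    Tendsto (fun i => eLpNorm (g i) 2 μ) l (𝓝 0) := by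
  have heq : ∀ i, eLpNorm (g i) 2 μ = ENNReal.ofReal ((∫ s, g i s ^ 2 ∂μ) ^ (1 / 2 : ℝ)) := by
    intro i
    rw [(hg i).eLpNorm_eq_integral_rpow_norm two_ne_zero ENNReal.ofNat_ne_top]
    simp
  have hcont : Continuous fun x : ℝ => ENNReal.ofReal (x ^ (1 / 2 : ℝ)) :=
    ENNReal.continuous_ofReal.comp (Real.continuous_rpow_const (by norm_num))
  simpa [heq, Function.comp_def] using (hcont.tendsto 0).comp h

end MeasureTheory

section Koopman

variable {S : Type*} [MeasurableSpace S]

noncomputable def koopman (μ : Measure S) (ψ : S ≃ᵐ S) (f : S → ℝ) (s : S) : ℝ :=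
  √((μ.map ψ).rnDeriv μ s).toReal * f (ψ.symm s)

section Isometry

variable (μ : Measure S) (ψ : S ≃ᵐ S)

theorem measurable_koopman {f : S → ℝ} (hf : Measurable f) : Measurable (koopman μ ψ f) :=
  (Measure.measurable_rnDeriv _ _).ennreal_toReal.sqrt.mul (hf.comp ψ.symm.measurable)

theorem koopman_sub (f g : S → ℝ) : koopman μ ψ (f - g) = koopman μ ψ f - koopman μ ψ g := by
  funext s
  simp [koopman, mul_sub]

theorem koopman_indicator (C : Set S) (f : S → ℝ) :
    koopman μ ψ (C.indicator f) = (ψ '' C).indicator (koopman μ ψ f) := by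
  funext s
  by_cases hs : ψ.symm s ∈ C <;> simp [koopman, hs, ψ.image_eq_preimage_symm]

theorem lintegral_enorm_koopman_sq [SigmaFinite μ] (hψ : μ.map ψ ≪ μ) {f : S → ℝ}
    (hf : Measurable f) : ∫⁻ s, ‖koopman μ ψ f s‖ₑ ^ 2 ∂μ = ∫⁻ s, ‖f s‖ₑ ^ 2 ∂μ := by
  have := ψ.sigmaFinite_map (μ := μ)
  calc ∫⁻ s, ‖koopman μ ψ f s‖ₑ ^ 2 ∂μ
      = ∫⁻ s, (μ.map ψ).rnDeriv μ s * ‖f (ψ.symm s)‖ₑ ^ 2 ∂μ := by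
        refine lintegral_congr_ae ?_
        filter_upwards [Measure.rnDeriv_lt_top (μ.map ψ) μ] with s hs
        rw [koopman, enorm_mul, mul_pow, Real.enorm_eq_ofReal (Real.sqrt_nonneg _),
          ← ENNReal.ofReal_pow (Real.sqrt_nonneg _), Real.sq_sqrt ENNReal.toReal_nonneg,
          ENNReal.ofReal_toReal hs.ne]
    _ = ∫⁻ s, ‖f (ψ.symm s)‖ₑ ^ 2 ∂(μ.map ψ) :=
        lintegral_rnDeriv_mul hψ (by fun_prop)
    _ = ∫⁻ s, ‖f s‖ₑ ^ 2 ∂μ := by simp [lintegral_map_equiv]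

theorem eLpNorm_koopman [SigmaFinite μ] (hψ : μ.map ψ ≪ μ) {f : S → ℝ} (hf : Measurable f) :
    eLpNorm (koopman μ ψ f) 2 μ = eLpNorm f 2 μ := by
  simp only [eLpNorm_eq_lintegral_rpow_enorm_toReal two_ne_zero ENNReal.ofNat_ne_top,
    ENNReal.toReal_ofNat, ENNReal.rpow_two, lintegral_enorm_koopman_sq μ ψ hψ hf]

theorem memLp_koopman [SigmaFinite μ] (hψ : μ.map ψ ≪ μ) {f : S → ℝ} (hf : Measurable f)
    (hf2 : MemLp f 2 μ) : MemLp (koopman μ ψ f) 2 μ :=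
  ⟨(measurable_koopman μ ψ hf).aestronglyMeasurable, eLpNorm_koopman μ ψ hψ hf ▸ hf2.2⟩

theorem eLpNorm_koopman_indicator_sub [SigmaFinite μ] (hψ : μ.map ψ ≪ μ) {P Q : Set S}
    (hP : MeasurableSet P) (hQ : MeasurableSet Q) :
    eLpNorm (koopman μ ψ (P.indicator 1) - koopman μ ψ (Q.indicator 1)) 2 μ
      = μ (symmDiff P Q) ^ (1 / 2 : ℝ) := by
  have hind : Measurable (1 : S → ℝ) := measurable_const
  rw [← koopman_sub, eLpNorm_koopman μ ψ hψ ((hind.indicator hP).sub (hind.indicator hQ)),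
    eLpNorm_indicator_one_sub_indicator_one hP hQ two_ne_zero ENNReal.ofNat_ne_top,
    ENNReal.toReal_ofNat]

end Isometry

theorem map_measure_symmDiff_image_rpow_le {μ : Measure S} [SigmaFinite μ] {φ ψ : S ≃ᵐ S}
    (hφ : μ.map φ ≪ μ) (hψ : μ.map ψ ≪ μ) {A C : Set S} (hA : MeasurableSet A)
    (hC : MeasurableSet C) :
    μ.map φ (symmDiff (ψ '' C) (φ '' A)) ^ (1 / 2 : ℝ) ≤
      eLpNorm (koopman μ ψ 1 - koopman μ φ 1) 2 μ + μ (symmDiff C A) ^ (1 / 2 : ℝ) +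
        eLpNorm (koopman μ ψ (A.indicator 1) - koopman μ φ (A.indicator 1)) 2 μ := by
  set u := koopman μ φ 1
  set v := koopman μ ψ 1
  have hu : Measurable u := measurable_koopman μ φ measurable_const
  have hv : Measurable v := measurable_koopman μ ψ measurable_const
  have hψC : MeasurableSet (ψ '' C) := ψ.measurableSet_image.mpr hC
  have hψA : MeasurableSet (ψ '' A) := ψ.measurableSet_image.mpr hA
  have hφA : MeasurableSet (φ '' A) := φ.measurableSet_image.mpr hA
  have hlhs : μ.map φ (symmDiff (ψ '' C) (φ '' A)) ^ (1 / 2 : ℝ)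
      = eLpNorm ((ψ '' C).indicator u - (φ '' A).indicator u) 2 μ := by
    rw [← φ.image_preimage (ψ '' C), ← koopman_indicator, ← koopman_indicator,
      eLpNorm_koopman_indicator_sub μ φ hφ (φ.measurable hψC) hA, φ.image_preimage, φ.map_apply, Set.preimage_symmDiff,
      φ.preimage_image]
  have hfirst : eLpNorm ((ψ '' C).indicator u - (ψ '' C).indicator v) 2 μ
      ≤ eLpNorm (u - v) 2 μ :=
    eLpNorm_mono fun s => by
      simpa only [Set.indicator_sub'] using norm_indicator_le_norm_self (u - v) s
  have hmid : eLpNorm ((ψ '' C).indicator v - (ψ '' A).indicator v) 2 μ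
      = μ (symmDiff C A) ^ (1 / 2 : ℝ) := by
    rw [← koopman_indicator, ← koopman_indicator, eLpNorm_koopman_indicator_sub μ ψ hψ hC hA]
  have hlast : (ψ '' A).indicator v - (φ '' A).indicator u
      = koopman μ ψ (A.indicator 1) - koopman μ φ (A.indicator 1) := by
    rw [koopman_indicator, koopman_indicator]
  calc μ.map φ (symmDiff (ψ '' C) (φ '' A)) ^ (1 / 2 : ℝ)
      = eLpNorm (((ψ '' C).indicator u - (ψ '' C).indicator v)
          + ((ψ '' C).indicator v - (ψ '' A).indicator v)
          + ((ψ '' A).indicator v - (φ '' A).indicator u)) 2 μ := by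
        rw [hlhs]
        congr 1
        abel
    _ ≤ eLpNorm ((ψ '' C).indicator u - (ψ '' C).indicator v) 2 μ
          + eLpNorm ((ψ '' C).indicator v - (ψ '' A).indicator v) 2 μ
          + eLpNorm ((ψ '' A).indicator v - (φ '' A).indicator u) 2 μ := by
        refine (eLpNorm_add_le (by fun_prop) (by fun_prop) one_le_two).trans ?_
        gcongr
        exact eLpNorm_add_le (by fun_prop) (by fun_prop) one_le_two
    _ ≤ _ := by
        rw [hmid, hlast, eLpNorm_sub_comm v u]
        gcongr

end Koopman

theorem koopman_action_on_measure_algebra_continuous_general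
    {S : Type*} [MeasurableSpace S]
    (μ : Measure S) [IsProbabilityMeasure μ]
    (φ : S ≃ᵐ S) (φn : ℕ → S ≃ᵐ S)
    (hφ : μ.map φ ≪ μ ∧ μ ≪ μ.map φ)
    (hφn : ∀ n, μ.map (φn n) ≪ μ ∧ μ ≪ μ.map (φn n))
    (hK : ∀ f : S → ℝ, Measurable f → Integrable (fun s => (f s) ^ 2) μ →
      Tendsto
        (fun n => ∫ s,
          (Real.sqrt (((μ.map (φn n)).rnDeriv μ s).toReal) * f ((φn n).symm s)
            - Real.sqrt (((μ.map φ).rnDeriv μ s).toReal) * f (φ.symm s)) ^ 2 ∂μ)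
        atTop (𝓝 0))
    (A : Set S) (hA : MeasurableSet A)
    (An : ℕ → Set S) (hAn : ∀ n, MeasurableSet (An n))
    (hconv : Tendsto (fun n => μ (symmDiff (An n) A)) atTop (𝓝 0)) :
    Tendsto (fun n => μ (symmDiff (⇑(φn n) '' An n) (⇑φ '' A))) atTop (𝓝 0) := by
  have hKoopman : ∀ f : S → ℝ, Measurable f → MemLp f 2 μ → Tendsto
      (fun n => eLpNorm (koopman μ (φn n) f - koopman μ φ f) 2 μ) atTop (𝓝 0) := fun f hf hf2 =>
    tendsto_eLpNorm_two_of_tendsto_integral_sq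
      (fun n => (memLp_koopman μ _ (hφn n).1 hf hf2).sub (memLp_koopman μ φ hφ.1 hf hf2))
      (hK f hf ((memLp_two_iff_integrable_sq hf.aestronglyMeasurable).mp hf2))
  have hone := hKoopman 1 measurable_const (memLp_const 1)
  have hindA := hKoopman (A.indicator 1) (measurable_const.indicator hA)
    ((memLp_const 1).indicator hA)
  have hsqrt : Tendsto (fun n => μ (symmDiff (An n) A) ^ (1 / 2 : ℝ)) atTop (𝓝 0) := by
    simpa [Function.comp_def] using
      (ENNReal.continuous_rpow_const (y := 1 / 2).tendsto 0).comp hconv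
  have hmap : Tendsto (fun n => μ.map φ (symmDiff (φn n '' An n) (φ '' A)) ^ (1 / 2 : ℝ))
      atTop (𝓝 0) :=
    tendsto_of_tendsto_of_tendsto_of_le_of_le tendsto_const_nhds
      (by simpa using (hone.add hsqrt).add hindA) (fun _ => zero_le)
      (fun n => map_measure_symmDiff_image_rpow_le hφ.1 (hφn n).1 hA (hAn n))
  refine hφ.2.tendsto_measure_nhds_zero ?_
  simpa only [Function.comp_def, one_div, ENNReal.rpow_inv_rpow two_ne_zero,
    ENNReal.zero_rpow_of_pos two_pos] using
    (ENNReal.continuous_rpow_const (y := 2).tendsto 0).comp hmap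

/-- The natural action of the group of measure-class-preserving
automorphisms of a standard Borel probability space `(S, μ)` on the measure
algebra of `(S, μ)` is jointly continuous: if `φₙ → φ` in the Koopman (strong
operator) topology and `μ (Aₙ ∆ A) → 0`, then `μ (φₙ(Aₙ) ∆ φ(A)) → 0`. -/
theorem koopman_action_on_measure_algebra_continuous
    {S : Type*} [MeasurableSpace S] [StandardBorelSpace S]
    (μ : Measure S) [IsProbabilityMeasure μ]
    (φ : S ≃ᵐ S) (φn : ℕ → S ≃ᵐ S)
    (hφ : μ.map φ ≪ μ ∧ μ ≪ μ.map φ)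
    (hφn : ∀ n, μ.map (φn n) ≪ μ ∧ μ ≪ μ.map (φn n))
    (hK : ∀ f : S → ℝ, Measurable f → Integrable (fun s => (f s) ^ 2) μ →
      Tendsto
        (fun n => ∫ s,
          (Real.sqrt (((μ.map (φn n)).rnDeriv μ s).toReal) * f ((φn n).symm s)
            - Real.sqrt (((μ.map φ).rnDeriv μ s).toReal) * f (φ.symm s)) ^ 2 ∂μ)
        atTop (𝓝 0))
    (A : Set S) (hA : MeasurableSet A)
    (An : ℕ → Set S) (hAn : ∀ n, MeasurableSet (An n))
    (hconv : Tendsto (fun n => μ (symmDiff (An n) A)) atTop (𝓝 0)) :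
    Tendsto (fun n => μ (symmDiff (⇑(φn n) '' An n) (⇑φ '' A))) atTop (𝓝 0) :=
  koopman_action_on_measure_algebra_continuous_general μ φ φn hφ hφn hK A hA An hAn hconv
end

section
/- Let (S,μ) be a standard Borel probability space, and let φ and φ_n (n ∈ ℕ) be measure-class-preserving Borel automorphisms of S with φ_n → φ in the Koopman (strong operator) topology. If A_n (n ∈ ℕ) are measurable subsets of S with μ(A_n) → 0, then μ(φ_n(A_n)) → 0. -/
/-!
Let `fₙ` and `g` be the densities of `φₙ_*μ` and `φ_*μ` with respect to `μ`. The Koopman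
convergence tested on `f = 1` says `‖√fₙ - √g‖₂ → 0`, and the pointwise bound
`g ≤ 2 fₙ + 2 (√fₙ - √g)²` gives `φ_*μ (B) ≤ 2 φₙ_*μ (B) + 2 ‖√fₙ - √g‖₂²` for every `B`.
For `B = φₙ(Aₙ)` the right-hand side is `2 μ(Aₙ) + o(1)`, so `φ_*μ (φₙ(Aₙ)) → 0`, and since
`μ ≪ φ_*μ` with `μ` finite, also `μ (φₙ(Aₙ)) → 0`.
-/

open MeasureTheory Filter Topology
open scoped ENNReal

theorem Real.le_two_mul_add_two_mul_sqrt_sub_sqrt_sq {a b : ℝ} (ha : 0 ≤ a) (hb : 0 ≤ b) :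
    a ≤ 2 * b + 2 * (√b - √a) ^ 2 := by
  nlinarith [Real.sq_sqrt ha, Real.sq_sqrt hb, sq_nonneg (2 * √b - √a)]

namespace MeasureTheory.Measure

variable {α ι : Type*} [MeasurableSpace α]

theorem AbsolutelyContinuous.tendsto_measure_zero {μ ν : Measure α} [IsFiniteMeasure μ]
    [HaveLebesgueDecomposition μ ν] [SFinite ν] (hμν : μ ≪ ν) {l : Filter ι} {s : ι → Set α}
    (hs : Tendsto (ν ∘ s) l (𝓝 0)) : Tendsto (μ ∘ s) l (𝓝 0) := by
  have hfin : ∫⁻ x, μ.rnDeriv ν x ∂ν ≠ ∞ :=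
    (lintegral_rnDeriv_le.trans_lt (measure_lt_top μ _)).ne
  simpa only [Function.comp_def, setLIntegral_rnDeriv hμν] using tendsto_setLIntegral_zero hfin hs

theorem measure_le_two_mul_add_two_mul_integral_sqrt_rnDeriv_sub_sq {μ ν ν' : Measure α}
    [SigmaFinite μ] [IsFiniteMeasure ν] [IsFiniteMeasure ν'] (hν : ν ≪ μ) (s : Set α) :
    ν s ≤ 2 * ν' s + 2 * ENNReal.ofReal
      (∫ x, (√(ν'.rnDeriv μ x).toReal - √(ν.rnDeriv μ x).toReal) ^ 2 ∂μ) := by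
  set d : α → ℝ := fun x => (√(ν'.rnDeriv μ x).toReal - √(ν.rnDeriv μ x).toReal) ^ 2
  have hd_int : Integrable d μ := by
    refine Integrable.mono' (((integrable_toReal_rnDeriv (μ := ν')).const_mul 2).add
      ((integrable_toReal_rnDeriv (μ := ν)).const_mul 2)) (by fun_prop) (ae_of_all _ fun x => ?_)
    rw [Real.norm_of_nonneg (sq_nonneg _), Pi.add_apply]
    have hsq' := Real.sq_sqrt (ν'.rnDeriv μ x).toReal_nonneg
    have hsq := Real.sq_sqrt (ν.rnDeriv μ x).toReal_nonneg
    nlinarith [sq_nonneg (√(ν'.rnDeriv μ x).toReal + √(ν.rnDeriv μ x).toReal)]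
  have hpt : ∀ᵐ x ∂μ, ν.rnDeriv μ x ≤ 2 * ν'.rnDeriv μ x + 2 * ENNReal.ofReal (d x) := by
    filter_upwards [rnDeriv_lt_top ν μ, rnDeriv_lt_top ν' μ] with x hx hx'
    rw [← ENNReal.ofReal_toReal hx.ne, ← ENNReal.ofReal_toReal hx'.ne, ← ENNReal.ofReal_ofNat 2,
      ← ENNReal.ofReal_mul (by norm_num), ← ENNReal.ofReal_mul (by norm_num),
      ← ENNReal.ofReal_add (by positivity) (by positivity)]
    exact ENNReal.ofReal_le_ofReal
      (Real.le_two_mul_add_two_mul_sqrt_sub_sqrt_sq ENNReal.toReal_nonneg ENNReal.toReal_nonneg)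
  calc ν s = ∫⁻ x in s, ν.rnDeriv μ x ∂μ := (setLIntegral_rnDeriv hν s).symm
    _ ≤ ∫⁻ x in s, 2 * ν'.rnDeriv μ x + 2 * ENNReal.ofReal (d x) ∂μ :=
      setLIntegral_mono_ae (by fun_prop) (hpt.mono fun x hx _ => hx)
    _ = 2 * ∫⁻ x in s, ν'.rnDeriv μ x ∂μ + 2 * ∫⁻ x in s, ENNReal.ofReal (d x) ∂μ := by
      rw [lintegral_add_left (by fun_prop), lintegral_const_mul _ (by fun_prop),
        lintegral_const_mul _ (by fun_prop)]
    _ ≤ 2 * ν' s + 2 * ∫⁻ x, ENNReal.ofReal (d x) ∂μ := by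
      gcongr
      · exact setLIntegral_rnDeriv_le s
      · exact restrict_le_self
    _ = 2 * ν' s + 2 * ENNReal.ofReal (∫ x, d x ∂μ) := by
      rw [ofReal_integral_eq_lintegral_ofReal hd_int (ae_of_all _ fun x => sq_nonneg _)]

theorem tendsto_measure_zero_of_tendsto_integral_sqrt_rnDeriv_sub_sq {μ ν : Measure α}
    {νs : ι → Measure α} [SigmaFinite μ] [IsFiniteMeasure ν] [∀ i, IsFiniteMeasure (νs i)]
    (hν : ν ≪ μ) {l : Filter ι} {s : ι → Set α}
    (hd : Tendsto (fun i => ∫ x, (√((νs i).rnDeriv μ x).toReal - √(ν.rnDeriv μ x).toReal) ^ 2 ∂μ)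
      l (𝓝 0))
    (hs : Tendsto (fun i => νs i (s i)) l (𝓝 0)) : Tendsto (fun i => ν (s i)) l (𝓝 0) := by
  have hbound := (ENNReal.Tendsto.const_mul (a := 2) hs (.inr ENNReal.ofNat_ne_top)).add
    (ENNReal.Tendsto.const_mul (a := 2) (ENNReal.tendsto_ofReal hd) (.inr ENNReal.ofNat_ne_top))
  rw [ENNReal.ofReal_zero, mul_zero, add_zero] at hbound
  exact tendsto_of_tendsto_of_tendsto_of_le_of_le tendsto_const_nhds hbound (fun _ => zero_le)
    fun i => measure_le_two_mul_add_two_mul_integral_sqrt_rnDeriv_sub_sq hν (s i)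

end MeasureTheory.Measure

theorem koopman_tendsto_images_of_null_general
    {S : Type*} [MeasurableSpace S]
    (μ : Measure S) [IsProbabilityMeasure μ]
    (φ : S ≃ᵐ S) (φn : ℕ → S ≃ᵐ S)
    (hφ : μ.map φ ≪ μ ∧ μ ≪ μ.map φ)
    (hK : ∀ f : S → ℝ, Measurable f → Integrable (fun s => (f s) ^ 2) μ →
      Tendsto
        (fun n => ∫ s,
          (Real.sqrt (((μ.map (φn n)).rnDeriv μ s).toReal) * f ((φn n).symm s)
            - Real.sqrt (((μ.map φ).rnDeriv μ s).toReal) * f (φ.symm s)) ^ 2 ∂μ)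
        atTop (𝓝 0))
    (An : ℕ → Set S)
    (hconv : Tendsto (fun n => μ (An n)) atTop (𝓝 0)) :
    Tendsto (fun n => μ (⇑(φn n) '' An n)) atTop (𝓝 0) := by
  have hd := hK (fun _ => 1) measurable_const (by simp)
  simp only [mul_one] at hd
  have himage : ∀ n, μ.map (φn n) (φn n '' An n) = μ (An n) := fun n => by
    rw [MeasurableEquiv.map_apply, (φn n).preimage_image]
  have hφ_image : Tendsto (fun n => μ.map φ (φn n '' An n)) atTop (𝓝 0) :=
    Measure.tendsto_measure_zero_of_tendsto_integral_sqrt_rnDeriv_sub_sq hφ.1 hd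
      (by simpa only [himage] using hconv)
  exact hφ.2.tendsto_measure_zero hφ_image

/-- If `φₙ → φ` in the Koopman (strong operator) topology among
measure-class-preserving Borel automorphisms of a standard Borel probability
space `(S, μ)`, and `Aₙ` are measurable sets with `μ Aₙ → 0`, then
`μ (φₙ(Aₙ)) → 0`. -/
theorem koopman_tendsto_images_of_null
    {S : Type*} [MeasurableSpace S] [StandardBorelSpace S]
    (μ : Measure S) [IsProbabilityMeasure μ]
    (φ : S ≃ᵐ S) (φn : ℕ → S ≃ᵐ S)
    (hφ : μ.map φ ≪ μ ∧ μ ≪ μ.map φ)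
    (hφn : ∀ n, μ.map (φn n) ≪ μ ∧ μ ≪ μ.map (φn n))
    (hK : ∀ f : S → ℝ, Measurable f → Integrable (fun s => (f s) ^ 2) μ →
      Tendsto
        (fun n => ∫ s,
          (Real.sqrt (((μ.map (φn n)).rnDeriv μ s).toReal) * f ((φn n).symm s)
            - Real.sqrt (((μ.map φ).rnDeriv μ s).toReal) * f (φ.symm s)) ^ 2 ∂μ)
        atTop (𝓝 0))
    (An : ℕ → Set S) (hAn : ∀ n, MeasurableSet (An n))
    (hconv : Tendsto (fun n => μ (An n)) atTop (𝓝 0)) :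
    Tendsto (fun n => μ (⇑(φn n) '' An n)) atTop (𝓝 0) :=
  koopman_tendsto_images_of_null_general μ φ φn hφ hK An hconv
end

section
/- Let G be a locally compact second countable topological group, (Ω,ν) and (S,μ) standard Borel probability spaces, and ρ : G × (Ω × S) → Ω × S a Borel action of G of the form ρ(g,(ω,s)) = (ω, ρ_S(g,ω,s)) for a Borel map ρ_S : G × Ω × S → S, such that for every g ∈ G and ω ∈ Ω the map s ↦ ρ_S(g,ω,s) pushes μ forward to a measure mutually absolutely continuous with μ. Then there exists a jointly Borel function D : G × Ω × S → [0,∞) such that for every g ∈ G, every ω ∈ Ω, and every measurable f : S → [0,∞], one has ∫_S D(g,ω,s)·f(s) dμ(s) = ∫_S f(ρ_S(g,ω,s)) dμ(s). In other words, the fiberwise Radon–Nikodym derivatives can be chosen to depend Borel-measurably on (g,ω,s) jointly. -/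
/-!
Each fiber map `ρ_S(g, ω, ·)` pushes `μ` forward to a measure `κ(g, ω)`, and `(g, ω) ↦ κ(g, ω)`
is a finite kernel because `ρ_S` is jointly measurable. Since `S` is countably generated, the
Radon–Nikodym derivative of a kernel with respect to the constant kernel `μ` can be chosen
jointly measurable; quasi-invariance (`κ(g, ω) ≪ μ`) makes it a density of `κ(g, ω)`, and since
it is a.e. finite, so is its `ℝ≥0`-truncation. The integral identity is then the change of variables
`∫ f ∘ ρ_S(g, ω, ·) dμ = ∫ f dκ(g, ω) = ∫ D(g, ω, ·) f dμ`.
-/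

open MeasureTheory Function
open scoped ENNReal NNReal

namespace ProbabilityTheory.Kernel

variable {α β γ : Type*} [MeasurableSpace α] [MeasurableSpace β] [MeasurableSpace γ]

noncomputable def mapFamily (μ : Measure β) [SFinite μ] (f : α → β → γ)
    (hf : Measurable (uncurry f)) : Kernel α γ where
  toFun a := μ.map (f a)
  measurable' := Measure.measurable_of_measurable_coe _ fun s hs => by
    simp_rw [Measure.map_apply hf.of_uncurry_left hs]
    exact measurable_measure_prodMk_left (hf hs)

@[simp]
lemma mapFamily_apply (μ : Measure β) [SFinite μ] (f : α → β → γ)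
    (hf : Measurable (uncurry f)) (a : α) : mapFamily μ f hf a = μ.map (f a) :=
  rfl

instance (μ : Measure β) [IsProbabilityMeasure μ] (f : α → β → γ)
    (hf : Measurable (uncurry f)) : IsMarkovKernel (mapFamily μ f hf) :=
  ⟨fun _ => Measure.isProbabilityMeasure_map hf.of_uncurry_left.aemeasurable⟩

lemma exists_measurable_density_of_absolutelyContinuous
    [MeasurableSpace.CountableOrCountablyGenerated α γ] (κ : Kernel α γ) [IsFiniteKernel κ]
    (μ : Measure γ) [IsFiniteMeasure μ] (hκμ : ∀ a, κ a ≪ μ) :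
    ∃ D : α × γ → ℝ≥0, Measurable D ∧ ∀ a, κ a = μ.withDensity fun c => D (a, c) := by
  set η : Kernel α γ := const α μ
  refine ⟨fun p => (κ.rnDeriv η p.1 p.2).toNNReal, (κ.measurable_rnDeriv η).ennreal_toNNReal,
    fun a => ?_⟩
  have h_density : κ a = μ.withDensity (κ.rnDeriv η a) := by
    rw [← withDensity_rnDeriv_eq (η := η) (hκμ a),
      Kernel.withDensity_apply _ (κ.measurable_rnDeriv η), const_apply]
  rw [h_density]
  exact MeasureTheory.withDensity_congr_ae (ae_eq_symm (coe_toNNReal_ae_eq (κ.rnDeriv_lt_top η)))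

end ProbabilityTheory.Kernel

open ProbabilityTheory

theorem fiberwise_radon_nikodym_jointly_borel_general
    {G Ω S : Type*}
    [MeasurableSpace G]
    [MeasurableSpace Ω]
    [MeasurableSpace S] [StandardBorelSpace S]
    (μ : Measure S) [IsProbabilityMeasure μ]
    (ρS : G → Ω → S → S)
    (hρmeas : Measurable (fun p : G × Ω × S => ρS p.1 p.2.1 p.2.2))
    (hqi : ∀ g ω, μ.map (ρS g ω) ≪ μ ∧ μ ≪ μ.map (ρS g ω)) :
    ∃ D : G × Ω × S → NNReal, Measurable D ∧
      ∀ (g : G) (ω : Ω) (f : S → ℝ≥0∞), Measurable f →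
        ∫⁻ s, (D (g, ω, s) : ℝ≥0∞) * f s ∂μ = ∫⁻ s, f (ρS g ω s) ∂μ := by
  have hρ : Measurable (uncurry fun p : G × Ω => ρS p.1 p.2) :=
    hρmeas.comp MeasurableEquiv.prodAssoc.measurable
  obtain ⟨D, hD, hκ⟩ := Kernel.exists_measurable_density_of_absolutelyContinuous
    (Kernel.mapFamily μ _ hρ) μ fun p => (hqi p.1 p.2).1
  refine ⟨D ∘ MeasurableEquiv.prodAssoc.symm, hD.comp MeasurableEquiv.prodAssoc.symm.measurable,
    fun g ω f hf => ?_⟩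
  have hfiber : Measurable (ρS g ω) := hρ.of_uncurry_left (x := (g, ω))
  rw [← lintegral_map hf hfiber, ← Kernel.mapFamily_apply μ _ hρ (g, ω), hκ,
    lintegral_withDensity_eq_lintegral_mul _ (by fun_prop) hf]
  rfl

/-- For a Borel action of a locally compact second countable group
`G` on `Ω × S` fixing the `Ω`-coordinate, with each fiber map quasi-invariant
for `μ`, the fiberwise Radon–Nikodym derivatives can be chosen jointly Borel:
there is a Borel `D : G × Ω × S → [0,∞)` with
`∫ D(g,ω,s) f(s) dμ(s) = ∫ f(ρ_S(g,ω,s)) dμ(s)` for all `g, ω` and all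
measurable `f : S → [0,∞]`. -/
theorem fiberwise_radon_nikodym_jointly_borel
    {G Ω S : Type*}
    [TopologicalSpace G] [Group G] [IsTopologicalGroup G] [LocallyCompactSpace G]
    [SecondCountableTopology G] [MeasurableSpace G] [BorelSpace G]
    [MeasurableSpace Ω] [StandardBorelSpace Ω]
    [MeasurableSpace S] [StandardBorelSpace S]
    (ν : Measure Ω) [IsProbabilityMeasure ν]
    (μ : Measure S) [IsProbabilityMeasure μ]
    (ρS : G → Ω → S → S)
    (hρmeas : Measurable (fun p : G × Ω × S => ρS p.1 p.2.1 p.2.2))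
    (hρid : ∀ ω s, ρS 1 ω s = s)
    (hρact : ∀ g₁ g₂ ω s, ρS (g₁ * g₂) ω s = ρS g₁ ω (ρS g₂ ω s))
    (hqi : ∀ g ω, μ.map (ρS g ω) ≪ μ ∧ μ ≪ μ.map (ρS g ω)) :
    ∃ D : G × Ω × S → NNReal, Measurable D ∧
      ∀ (g : G) (ω : Ω) (f : S → ℝ≥0∞), Measurable f →
        ∫⁻ s, (D (g, ω, s) : ℝ≥0∞) * f s ∂μ = ∫⁻ s, f (ρS g ω s) ∂μ :=
  fiberwise_radon_nikodym_jointly_borel_general μ ρS hρmeas hqi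
end

section
/- Let G be a locally compact second countable topological group with a left Haar measure λ, let H be a topological group, let (X,μ) be a standard Borel probability space, and let ρ : G × X → X be a Borel action such that for every g ∈ G the map x ↦ ρ(g,x) pushes μ forward to a measure mutually absolutely continuous with μ. Let α, β : G × X → H be strict Borel cocycles for ρ. If for λ-almost every g ∈ G one has α(g,x) = β(g,x) for μ-almost every x ∈ X, then for every g ∈ G one has α(g,x) = β(g,x) for μ-almost every x ∈ X. -/
open MeasureTheory

/-!
Pick `h` outside two Haar-null sets so that both `α h =ᵐ β h` and `α (g * h⁻¹) =ᵐ β (g * h⁻¹)`;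
this is possible because `h ↦ g * h⁻¹` preserves Haar-null sets. Writing `g = (g * h⁻¹) * h`,
the cocycle identity expresses `α g` through `α (g * h⁻¹) ∘ ρ h` and `α h`, and quasi-invariance
of `μ` under `ρ h` transports the first equality along `ρ h`.
-/

theorem MeasureTheory.Measure.quasiMeasurePreserving_mul_inv {G : Type*} [MeasurableSpace G]
    [Group G] [MeasurableMul₂ G] [MeasurableInv G] (μ : Measure G) [SFinite μ]
    [μ.IsMulLeftInvariant] (g : G) :
    QuasiMeasurePreserving (fun h => g * h⁻¹) μ μ :=
  (measurePreserving_mul_left μ g).quasiMeasurePreserving.comp (quasiMeasurePreserving_inv μ)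

theorem ae_eq_mul_of_cocycle {G H X : Type*} [Mul G] [Mul H] [MeasurableSpace X]
    {μ : Measure X} {ρ : G → X → X} {α β : G → X → H}
    (hαcoc : ∀ g₁ g₂ x, α (g₁ * g₂) x = α g₁ (ρ g₂ x) * α g₂ x)
    (hβcoc : ∀ g₁ g₂ x, β (g₁ * g₂) x = β g₁ (ρ g₂ x) * β g₂ x)
    {g₁ g₂ : G} (hρ : Measure.QuasiMeasurePreserving (ρ g₂) μ μ)
    (h₁ : α g₁ =ᵐ[μ] β g₁) (h₂ : α g₂ =ᵐ[μ] β g₂) :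
    α (g₁ * g₂) =ᵐ[μ] β (g₁ * g₂) := by
  filter_upwards [hρ.ae h₁, h₂] with x hx₁ hx₂
  rw [hαcoc, hβcoc, hx₁, hx₂]

theorem strict_cocycles_ae_equal_of_haar_ae_equal_general
    {G H X : Type*}
    [TopologicalSpace G] [Group G] [IsTopologicalGroup G] [LocallyCompactSpace G]
    [SecondCountableTopology G] [MeasurableSpace G] [BorelSpace G]
    [Group H]
    [MeasurableSpace X]
    (lam : Measure G) [lam.IsHaarMeasure]
    (μ : Measure X)
    (ρ : G → X → X) (hρ : Measurable (fun p : G × X => ρ p.1 p.2))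
    (hqi : ∀ g, μ.map (ρ g) ≪ μ ∧ μ ≪ μ.map (ρ g))
    (α β : G → X → H)
    (hαcoc : ∀ g₁ g₂ x, α (g₁ * g₂) x = α g₁ (ρ g₂ x) * α g₂ x)
    (hβcoc : ∀ g₁ g₂ x, β (g₁ * g₂) x = β g₁ (ρ g₂ x) * β g₂ x)
    (hae : ∀ᵐ g ∂lam, ∀ᵐ x ∂μ, α g x = β g x) :
    ∀ g : G, ∀ᵐ x ∂μ, α g x = β g x := by
  intro g
  have hae_mul_inv : ∀ᵐ h ∂lam, α (g * h⁻¹) =ᵐ[μ] β (g * h⁻¹) :=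
    (lam.quasiMeasurePreserving_mul_inv g).ae hae
  obtain ⟨h, hh, hgh⟩ := (hae.and hae_mul_inv).exists
  have hρh : Measure.QuasiMeasurePreserving (ρ h) μ μ :=
    ⟨hρ.comp measurable_prodMk_left, (hqi h).1⟩
  have hg := ae_eq_mul_of_cocycle hαcoc hβcoc hρh hgh hh
  rwa [inv_mul_cancel_right] at hg

/-- If two strict Borel cocycles `α, β : G × X → H` over a Borel
action with quasi-invariant measure agree a.e. on `X` for Haar-almost every
`g ∈ G`, then they agree a.e. on `X` for every `g ∈ G`. -/
theorem strict_cocycles_ae_equal_of_haar_ae_equal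
    {G H X : Type*}
    [TopologicalSpace G] [Group G] [IsTopologicalGroup G] [LocallyCompactSpace G]
    [SecondCountableTopology G] [MeasurableSpace G] [BorelSpace G]
    [TopologicalSpace H] [Group H] [IsTopologicalGroup H]
    [MeasurableSpace H] [BorelSpace H]
    [MeasurableSpace X] [StandardBorelSpace X]
    (lam : Measure G) [lam.IsHaarMeasure]
    (μ : Measure X) [IsProbabilityMeasure μ]
    (ρ : G → X → X) (hρ : Measurable (fun p : G × X => ρ p.1 p.2))
    (hρid : ∀ x, ρ 1 x = x)
    (hρact : ∀ g₁ g₂ x, ρ (g₁ * g₂) x = ρ g₁ (ρ g₂ x))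
    (hqi : ∀ g, μ.map (ρ g) ≪ μ ∧ μ ≪ μ.map (ρ g))
    (α β : G → X → H)
    (hα : Measurable (fun p : G × X => α p.1 p.2))
    (hβ : Measurable (fun p : G × X => β p.1 p.2))
    (hαcoc : ∀ g₁ g₂ x, α (g₁ * g₂) x = α g₁ (ρ g₂ x) * α g₂ x)
    (hβcoc : ∀ g₁ g₂ x, β (g₁ * g₂) x = β g₁ (ρ g₂ x) * β g₂ x)
    (hae : ∀ᵐ g ∂lam, ∀ᵐ x ∂μ, α g x = β g x) :
    ∀ g : G, ∀ᵐ x ∂μ, α g x = β g x :=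
  strict_cocycles_ae_equal_of_haar_ae_equal_general lam μ ρ hρ hqi α β hαcoc hβcoc hae
end
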